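/- arXiv:0904.3153 — 2 statements merged into one kernel-verified Lean document; each statement's English description precedes it below -/
import Mathlib

section
/- Let K be an infinite field of characteristic 2 and V = K \times K the ring with operations (a,b)+(c,d)=(a+c, ac+b+d) and (a,b)\times(c,d)=(ac, bc^2+a^2d). Then V has no proper ideal of finite index: every ideal J of V with finite quotient V/J satisfies J = V. -/
/-- Twisted addition on `K × K`: `(a,b) + (c,d) = (a+c, ac+b+d)`. -/
def Vadd {K : Type*} [Field K] (v w : K × K) : K × K :=
  (v.1 + w.1, v.1 * w.1 + v.2 + w.2)

/-- Twisted multiplication on `K × K`: `(a,b) × (c,d) = (ac, bc² + a²d)`. -/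
def Vmul {K : Type*} [Field K] (v w : K × K) : K × K :=
  (v.1 * w.1, v.2 * w.1 ^ 2 + v.1 ^ 2 * w.2)

/-!
The first coordinate `V → K` is additive for the twisted addition, so its image on an additive
subgroup `J` of finite index is a subgroup of finite index in the infinite group `K`; in particular
it is nonzero. An element `z` with `z.1 ≠ 0` is a unit of `V`, so an ideal containing it is all of `V`.
-/

section TwistedRing

variable {K : Type*} [Field K]

@[simp]
theorem Vadd_fst (v w : K × K) : (Vadd v w).1 = v.1 + w.1 := rfl

@[simp]
theorem Vmul_fst (v w : K × K) : (Vmul v w).1 = v.1 * w.1 := rfl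

theorem Vmul_surjective_of_fst_ne_zero {z : K × K} (hz : z.1 ≠ 0) :
    Function.Surjective (Vmul z) := by
  intro v
  set a := v.1 / z.1
  refine ⟨(a, (v.2 - z.2 * a ^ 2) / z.1 ^ 2), Prod.ext ?_ ?_⟩
  · simp [a, mul_div_cancel₀ _ hz]
  · simp only [Vmul]
    field_simp
    ring

theorem exists_mem_fst_eq_sub {J : Set (K × K)}
    (haddJ : ∀ v ∈ J, ∀ w ∈ J, Vadd v w ∈ J)
    (hnegJ : ∀ v ∈ J, ∃ w ∈ J, Vadd v w = ((0 : K), (0 : K)))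
    {j j' : K × K} (hj : j ∈ J) (hj' : j' ∈ J) :
    ∃ z ∈ J, z.1 = j.1 - j'.1 := by
  obtain ⟨w, hwJ, hw⟩ := hnegJ j' hj'
  have hw1 : j'.1 + w.1 = 0 := congrArg Prod.fst hw
  exact ⟨Vadd j w, haddJ j hj w hwJ, by rw [Vadd_fst]; linear_combination hw1⟩

theorem exists_mem_fst_ne_zero_of_finite_cosets [Infinite K] {J : Set (K × K)}
    (haddJ : ∀ v ∈ J, ∀ w ∈ J, Vadd v w ∈ J)
    (hnegJ : ∀ v ∈ J, ∃ w ∈ J, Vadd v w = ((0 : K), (0 : K)))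
    (hfin : ∃ S : Finset (K × K), ∀ v : K × K, ∃ u ∈ S, ∃ j ∈ J, v = Vadd u j) :
    ∃ z ∈ J, z.1 ≠ 0 := by
  obtain ⟨S, hS⟩ := hfin
  have hcoset : ∀ x : K, ∃ u : S, ∃ j ∈ J, x = u.1.1 + j.1 := fun x => by
    obtain ⟨u, hu, j, hj, he⟩ := hS (x, 0)
    exact ⟨⟨u, hu⟩, j, hj, congrArg Prod.fst he⟩
  choose rep j hjJ hje using hcoset
  -- pigeonhole: two distinct `x ≠ y` lie over the same coset representative
  obtain ⟨x, y, hxy, hrep⟩ := Finite.exists_ne_map_eq_of_infinite rep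
  obtain ⟨z, hzJ, hz⟩ := exists_mem_fst_eq_sub haddJ hnegJ (hjJ x) (hjJ y)
  refine ⟨z, hzJ, fun hz0 => hxy ?_⟩
  rw [hje x, hje y, hrep]
  linear_combination hz0 - hz

end TwistedRing

theorem twisted_ring_no_finite_index_ideal_general {K : Type*} [Field K]
    (hInf : Infinite K) (J : Set (K × K))
    (haddJ : ∀ v ∈ J, ∀ w ∈ J, Vadd v w ∈ J)
    (hnegJ : ∀ v ∈ J, ∃ w ∈ J, Vadd v w = ((0 : K), (0 : K)))
    (hmulJ : ∀ v ∈ J, ∀ w : K × K, Vmul v w ∈ J ∧ Vmul w v ∈ J)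
    (hfin : ∃ S : Finset (K × K), ∀ v : K × K, ∃ u ∈ S, ∃ j ∈ J, v = Vadd u j) :
    J = Set.univ := by
  obtain ⟨z, hzJ, hz⟩ := exists_mem_fst_ne_zero_of_finite_cosets haddJ hnegJ hfin
  refine Set.eq_univ_of_forall fun v => ?_
  obtain ⟨w, rfl⟩ := Vmul_surjective_of_fst_ne_zero hz v
  exact (hmulJ z hzJ w).1

/-- Let `K` be an infinite field of characteristic 2 and `V = K × K` the twisted ring.
Then `V` has no proper ideal of finite index: if `J ⊆ V` is closed under the twisted
addition and negation, absorbs the twisted multiplication, and has only finitely many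
additive cosets, then `J = V`. -/
theorem twisted_ring_no_finite_index_ideal {K : Type*} [Field K] (hK : ringChar K = 2)
    (hInf : Infinite K) (J : Set (K × K))
    (hzero : ((0 : K), (0 : K)) ∈ J)
    (haddJ : ∀ v ∈ J, ∀ w ∈ J, Vadd v w ∈ J)
    (hnegJ : ∀ v ∈ J, ∃ w ∈ J, Vadd v w = ((0 : K), (0 : K)))
    (hmulJ : ∀ v ∈ J, ∀ w : K × K, Vmul v w ∈ J ∧ Vmul w v ∈ J)
    (hfin : ∃ S : Finset (K × K), ∀ v : K × K, ∃ u ∈ S, ∃ j ∈ J, v = Vadd u j) :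
    J = Set.univ :=
  twisted_ring_no_finite_index_ideal_general hInf J haddJ hnegJ hmulJ hfin
end

section
/- There is no injective ring homomorphism from \mathbb{Z}\langle x, y \rangle into any finite-dimensional algebra over a field, nor into any ring possessing a finite-index ideal that is a finite-dimensional algebra over a field. -/
/-!
A finite-dimensional algebra of dimension `d` satisfies the standard identity
`s_{d+1}(v) = ∑_σ sign σ • v_{σ 0} ⋯ v_{σ d} = 0`, because `s_{d+1}` is alternating multilinear.
The free ring satisfies no identity `c • s_N = 0` with `c ≠ 0`: the `N!` monomials of
`s_N(y, x y, x² y, …)` are pairwise distinct words. If `I` has finite index `m` in `S` and is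
isomorphic to a finite-dimensional nonunital algebra `A`, then `I` embeds in the unital
finite-dimensional algebra `Unitization K A`, so some `s_N` vanishes on `I`; as `m • S ⊆ I`, the
ring `S` satisfies `m ^ N • s_N = 0`, which an embedding of the free ring would pull back.
-/

open Equiv

/-- The standard polynomial `s_n` evaluated at `v`. -/
def stdPoly (R : Type*) [Ring R] (n : ℕ) (v : Fin n → R) : R :=
  ∑ σ : Perm (Fin n), Perm.sign σ • (List.ofFn (v ∘ σ)).prod

section StandardPolynomial

variable {R R' : Type*} [Ring R] [Ring R']

theorem alternatization_mkPiAlgebraFin_apply (K : Type*) [CommSemiring K] [Algebra K R]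
    {n : ℕ} (v : Fin n → R) :
    (MultilinearMap.mkPiAlgebraFin K n R).alternatization v = stdPoly R n v := by
  simp only [MultilinearMap.alternatization_apply, MultilinearMap.domDomCongr_apply,
    MultilinearMap.mkPiAlgebraFin_apply, stdPoly]
  rfl

theorem map_stdPoly (f : R →+* R') {n : ℕ} (v : Fin n → R) :
    f (stdPoly R n v) = stdPoly R' n (f ∘ v) := by
  simp only [stdPoly, map_sum, Units.smul_def, map_zsmul, map_list_prod, List.map_ofFn]
  rfl

theorem stdPoly_zsmul {n : ℕ} (c : ℤ) (v : Fin n → R) :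
    stdPoly R n (c • v) = c ^ n • stdPoly R n v := by
  have := (MultilinearMap.mkPiAlgebraFin ℤ n R).alternatization.map_smul_univ (fun _ => c) v
  simp only [alternatization_mkPiAlgebraFin_apply, Finset.prod_const, Finset.card_univ,
    Fintype.card_fin] at this
  exact this

theorem stdPoly_eq_zero_of_finrank_lt {K B : Type*} [Field K] [Ring B] [Algebra K B]
    [FiniteDimensional K B] {n : ℕ} (hn : Module.finrank K B < n) (v : Fin n → B) :
    stdPoly B n v = 0 := by
  rw [← alternatization_mkPiAlgebraFin_apply K]
  refine AlternatingMap.map_linearDependent _ v fun hv => ?_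
  simpa using (hv.fintype_card_le_finrank.trans_lt hn).ne

end StandardPolynomial

namespace FreeMonoid

variable {α : Type*} {a b : α}

theorem of_mul_eq_of_mul_iff {u u' : FreeMonoid α} :
    of a * u = of b * u' ↔ a = b ∧ u = u' := by
  rw [← toList.injective.eq_iff, toList_of_mul, toList_of_mul, List.cons.injEq,
    toList.injective.eq_iff]

theorem eq_of_pow_mul_of_mul_eq (hab : a ≠ b) {i j : ℕ} {u u' : FreeMonoid α}
    (h : of a ^ i * of b * u = of a ^ j * of b * u') : i = j ∧ u = u' := by
  induction i generalizing j with
  | zero =>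
    cases j with
    | zero => simpa [mul_assoc] using h
    | succ j =>
      simp only [pow_zero, one_mul, pow_succ', mul_assoc, of_mul_eq_of_mul_iff] at h
      exact absurd h.1.symm hab
  | succ i ih =>
    cases j with
    | zero =>
      simp only [pow_zero, one_mul, pow_succ', mul_assoc, of_mul_eq_of_mul_iff] at h
      exact absurd h.1 hab
    | succ j =>
      simp only [pow_succ', mul_assoc, of_mul_eq_of_mul_iff, true_and] at h
      simpa using ih (by simpa only [mul_assoc] using h)

theorem prod_ofFn_pow_mul_injective (hab : a ≠ b) :
    ∀ {n : ℕ}, Function.Injective fun f : Fin n → ℕ => (List.ofFn fun k => of a ^ f k * of b).prod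
  | 0, f, g, _ => funext fun k => k.elim0
  | n + 1, f, g, h => by
    simp only [List.ofFn_succ, List.prod_cons] at h
    obtain ⟨h0, hs⟩ := eq_of_pow_mul_of_mul_eq hab h
    exact funext (Fin.cases h0 (congrFun (prod_ofFn_pow_mul_injective hab hs)))

end FreeMonoid

theorem MonoidAlgebra.coeff_stdPoly_of {k M : Type*} [Ring k] [Monoid M] {n : ℕ} (u : Fin n → M)
    (hu : Function.Injective fun σ : Perm (Fin n) => (List.ofFn (u ∘ σ)).prod) :
    (stdPoly (MonoidAlgebra k M) n (of k M ∘ u)).coeff (List.ofFn u).prod = 1 := by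
  classical
  have hof (σ : Perm (Fin n)) :
      (List.ofFn ((of k M ∘ u) ∘ σ)).prod = of k M (List.ofFn (u ∘ σ)).prod := by
    rw [map_list_prod, List.map_ofFn, Function.comp_assoc]
  have hword (σ : Perm (Fin n)) : (List.ofFn (u ∘ σ)).prod = (List.ofFn u).prod ↔ σ = 1 :=
    hu.eq_iff (b := 1)
  simp only [stdPoly, hof, of_apply, smul_single, coeff_sum, coeff_single, Finsupp.coe_finsetSum,
    Finset.sum_apply, Finsupp.single_apply, hword, Finset.sum_ite_eq', Finset.mem_univ, if_true,
    Perm.sign_one, one_smul]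

theorem FreeRing.zsmul_stdPoly_ne_zero {α : Type*} {a b : α} (hab : a ≠ b) (n : ℕ) {c : ℤ}
    (hc : c ≠ 0) : c • stdPoly (FreeRing α) n (fun i => of a ^ (i : ℕ) * of b) ≠ 0 := by
  let u (i : Fin n) : FreeMonoid α := .of a ^ (i : ℕ) * .of b
  let ψ : FreeRing α →+* MonoidAlgebra ℤ (FreeMonoid α) :=
    lift fun x => MonoidAlgebra.of ℤ _ (.of x)
  have hψ : ψ ∘ (fun i : Fin n => of a ^ (i : ℕ) * of b) = MonoidAlgebra.of ℤ _ ∘ u := by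
    ext1 i
    simp [ψ, u]
  have hu : Function.Injective fun σ : Perm (Fin n) => (List.ofFn (u ∘ σ)).prod := fun σ τ h =>
    Perm.ext fun i => Fin.ext (congrFun (FreeMonoid.prod_ofFn_pow_mul_injective hab h) i)
  have hcoeff : (ψ (c • stdPoly (FreeRing α) n (fun i => of a ^ (i : ℕ) * of b))).coeff
      (List.ofFn u).prod = c := by
    rw [map_zsmul, map_stdPoly, hψ, MonoidAlgebra.coeff_smul, Finsupp.smul_apply,
      MonoidAlgebra.coeff_stdPoly_of u hu, smul_eq_mul, mul_one]
  intro h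
  rw [h, map_zero, MonoidAlgebra.coeff_zero, Finsupp.coe_zero, Pi.zero_apply] at hcoeff
  exact hc hcoeff.symm

section IdealTransport

variable {S T : Type*}

theorem prod_ofFn_mem_and_map [Monoid S] [Monoid T] {I : Set S}
    (hI : ∀ x ∈ I, ∀ y ∈ I, x * y ∈ I) {e : S → T}
    (hmul : ∀ x ∈ I, ∀ y ∈ I, e (x * y) = e x * e y) :
    ∀ {n : ℕ} (v : Fin (n + 1) → S), (∀ i, v i ∈ I) →
      (List.ofFn v).prod ∈ I ∧ e (List.ofFn v).prod = (List.ofFn (e ∘ v)).prod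
  | 0, v, hv => by simpa using hv 0
  | n + 1, v, hv => by
    obtain ⟨hmem, hmap⟩ := prod_ofFn_mem_and_map hI hmul (fun i => v i.succ) fun i => hv _
    rw [List.ofFn_succ (f := v), List.prod_cons, List.ofFn_succ (f := e ∘ v), List.prod_cons,
      hmul _ (hv 0) _ hmem, hmap]
    exact ⟨hI _ (hv 0) _ hmem, rfl⟩

theorem stdPoly_eq_zero_of_injOn [Ring S] [Ring T] {I : AddSubgroup S}
    (hI : ∀ x ∈ I, ∀ y ∈ I, x * y ∈ I) {e : S → T} (hinj : Set.InjOn e I)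
    (hadd : ∀ x ∈ I, ∀ y ∈ I, e (x + y) = e x + e y)
    (hmul : ∀ x ∈ I, ∀ y ∈ I, e (x * y) = e x * e y) {n : ℕ}
    (hT : ∀ w : Fin (n + 1) → T, stdPoly T (n + 1) w = 0)
    (v : Fin (n + 1) → S) (hv : ∀ i, v i ∈ I) : stdPoly S (n + 1) v = 0 := by
  let g : I →+ T := AddMonoidHom.mk' (fun x => e x) fun x y => hadd x x.2 y y.2
  have hprod (σ : Perm (Fin (n + 1))) := prod_ofFn_mem_and_map hI hmul (v ∘ σ) fun i => hv _
  let s : I := ∑ σ : Perm (Fin (n + 1)), Perm.sign σ • ⟨_, (hprod σ).1⟩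
  have hs : (s : S) = stdPoly S (n + 1) v := by
    simp only [s, stdPoly, AddSubgroup.val_finsetSum, Units.smul_def, AddSubgroup.coe_zsmul]
  have hgs : g s = 0 := by
    rw [← hT (e ∘ v)]
    simp only [g, s, stdPoly, map_sum, Units.smul_def, map_zsmul, AddMonoidHom.mk'_apply,
      (hprod _).2]
    rfl
  have := hinj s.2 I.zero_mem (hgs.trans g.map_zero.symm)
  rw [← hs, this]

end IdealTransport

instance Unitization.instFiniteDimensional (K A : Type*) [Field K] [NonUnitalRing A] [Module K A]
    [FiniteDimensional K A] : FiniteDimensional K (Unitization K A) :=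
  (Unitization.linearEquiv K K A).symm.finiteDimensional

theorem exists_zsmul_stdPoly_eq_zero (K A : Type*) {S : Type*} [Field K] [NonUnitalRing A]
    [Module K A] [SMulCommClass K A A] [IsScalarTower K A A] [FiniteDimensional K A] [Ring S]
    {I : AddSubgroup S} (hI : ∀ x ∈ I, ∀ y ∈ I, x * y ∈ I) [Finite (S ⧸ I)] {e : S → A}
    (hinj : Set.InjOn e I) (hadd : ∀ x ∈ I, ∀ y ∈ I, e (x + y) = e x + e y)
    (hmul : ∀ x ∈ I, ∀ y ∈ I, e (x * y) = e x * e y) :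
    ∃ N : ℕ, ∃ c : ℤ, c ≠ 0 ∧ ∀ v : Fin N → S, c • stdPoly S N v = 0 := by
  let m : ℤ := I.index
  refine ⟨Module.finrank K (Unitization K A) + 1, m ^ (Module.finrank K (Unitization K A) + 1),
    pow_ne_zero _ (Int.natCast_ne_zero.2 I.index_ne_zero_of_finite), fun v => ?_⟩
  rw [← stdPoly_zsmul]
  refine stdPoly_eq_zero_of_injOn hI (e := fun x => (e x : Unitization K A))
    (Unitization.inr_injective.comp_injOn hinj) (fun x hx y hy => by simp [hadd x hx y hy])
    (fun x hx y hy => by simp [hmul x hx y hy])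
    (stdPoly_eq_zero_of_finrank_lt (Nat.lt_succ_self _)) _ fun i => ?_
  simpa [m] using I.nsmul_index_mem (v i)

theorem FreeRing.not_exists_injective_of_zsmul_stdPoly_eq_zero {α S : Type*} [Nontrivial α]
    [Ring S] {N : ℕ} {c : ℤ} (hc : c ≠ 0) (hS : ∀ v : Fin N → S, c • stdPoly S N v = 0) :
    ¬ ∃ φ : FreeRing α →+* S, Function.Injective φ := by
  rintro ⟨φ, hφ⟩
  obtain ⟨a, b, hab⟩ := exists_pair_ne α
  refine FreeRing.zsmul_stdPoly_ne_zero hab N hc (hφ ?_)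
  rw [map_zsmul, map_stdPoly, map_zero]
  exact hS _

theorem FreeRing.not_exists_injective_of_virtuallyLinear (K A : Type*) {α S : Type*}
    [Nontrivial α] [Field K] [NonUnitalRing A] [Module K A] [SMulCommClass K A A]
    [IsScalarTower K A A] [FiniteDimensional K A] [Ring S] {I : AddSubgroup S}
    (hI : ∀ x ∈ I, ∀ y ∈ I, x * y ∈ I) [Finite (S ⧸ I)] {e : S → A} (hinj : Set.InjOn e I)
    (hadd : ∀ x ∈ I, ∀ y ∈ I, e (x + y) = e x + e y)
    (hmul : ∀ x ∈ I, ∀ y ∈ I, e (x * y) = e x * e y) :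
    ¬ ∃ φ : FreeRing α →+* S, Function.Injective φ :=
  let ⟨_, _, hc, hS⟩ := exists_zsmul_stdPoly_eq_zero K A hI hinj hadd hmul
  FreeRing.not_exists_injective_of_zsmul_stdPoly_eq_zero hc hS

/-- There is no injective ring homomorphism from the free ring `ℤ⟨x,y⟩`
(`FreeRing Bool`) into any finite-dimensional (unital) algebra over a field, nor into
any ring possessing a finite-index two-sided ideal which, as a nonunital ring, is
isomorphic to a finite-dimensional (not necessarily unital) algebra over a field. -/
theorem freeRing_not_virtually_linear :
    -- no embedding into a finite-dimensional algebra over a field: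
    (∀ (K B : Type) [Field K] [Ring B] [Algebra K B] [FiniteDimensional K B],
      ¬ ∃ φ : FreeRing Bool →+* B, Function.Injective φ) ∧
    -- no embedding into a ring with a finite-index ideal that is a
    -- finite-dimensional algebra over a field:
    (∀ (K A S : Type) [Field K] [NonUnitalRing A] [Module K A] [SMulCommClass K A A]
        [IsScalarTower K A A] [FiniteDimensional K A] [Ring S]
      (I : AddSubgroup S),
      (∀ x ∈ I, ∀ s : S, s * x ∈ I ∧ x * s ∈ I) →  -- `I` is a two-sided ideal
      Finite (S ⧸ I) →                               -- of finite additive index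
      ∀ e : S → A, Set.InjOn e (I : Set S) →         -- isomorphic, as a nonunital
        (∀ a : A, ∃ x ∈ I, e x = a) →                -- ring, to `A`
        (∀ x ∈ I, ∀ y ∈ I, e (x + y) = e x + e y) →
        (∀ x ∈ I, ∀ y ∈ I, e (x * y) = e x * e y) →
      ¬ ∃ φ : FreeRing Bool →+* S, Function.Injective φ) := by
  refine ⟨fun K B _ _ _ _ => ?_, fun K A S _ _ _ _ _ _ _ I hI _ e hinj _ hadd hmul =>
    FreeRing.not_exists_injective_of_virtuallyLinear K A (fun x hx y _ => (hI x hx y).2) hinj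
      hadd hmul⟩
  exact FreeRing.not_exists_injective_of_virtuallyLinear K B (I := ⊤) (fun _ _ _ _ => trivial)
    (e := id) (Set.injOn_id _) (fun _ _ _ _ => rfl) (fun _ _ _ _ => rfl)
end
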